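/- Let V be a non-singular orthogonal geometry over a field F of characteristic ≠ 2, and let x ∈ Γ(V). Then the isometry ρ(x): v ↦ x v (x')⁻¹ has determinant 1 (i.e., ρ(x) ∈ SO(V)) if and only if x lies in the even part C⁰(V) (i.e., x' = x). Consequently, the restriction ρ₀ of ρ to Γ⁰(V) = Γ(V) ∩ C⁰(V) gives a short exact sequence 1 → F^× → Γ⁰(V) → SO(V) → 1. -/

import Mathlib

/-!
By Cartan–Dieudonné, every isometry of a nondegenerate symmetric form is a product of
reflections in anisotropic vectors, and the reflection in `w` is the twisted conjugation by
`w ∈ Γ(V)`. So a product of `k` reflections has determinant `(-1)^k` and lifts to a product of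
`k` vectors, an element of parity `k`. Two lifts of one isometry differ by some `z` with
`z v = v z'` for all `v`; since `v z - z' v` is the contraction of `z` by the functional
`polar(v, ·)`, nondegeneracy kills every contraction of `z`, which forces `z` to be a scalar
(peel off one vector of an orthogonal basis at a time). Hence every `x ∈ Γ(V)` is a scalar times
a product of `k` vectors, and `ρ(x) ∈ SO(V)` iff `k` is even iff `x' = x`.
-/

theorem Module.det_preReflection {F V : Type*} [Field F] [AddCommGroup V] [Module F V]
    [FiniteDimensional F V] (x : V) (f : Module.Dual F V) :
    LinearMap.det (Module.preReflection x f) = 1 - f x := by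
  classical
  let b := Module.finBasis F V
  have hmat : LinearMap.toMatrix b b (Module.preReflection x f) =
      1 + Matrix.replicateCol Unit (fun i => -b.repr x i) *
        Matrix.replicateRow Unit (fun j => f (b j)) := by
    ext i j
    simp [LinearMap.toMatrix_apply, Module.preReflection_apply, Matrix.mul_apply, Matrix.one_apply,
      Finsupp.single_apply, eq_comm, sub_eq_add_neg, mul_comm]
  have hfx : f x = ∑ i, b.repr x i * f (b i) := by
    conv_lhs => rw [← b.sum_repr x]
    simp only [map_sum, map_smul, smul_eq_mul]
  rw [← LinearMap.det_toMatrix b, hmat, Matrix.det_one_add_replicateCol_mul_replicateRow, hfx]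
  simp [dotProduct, sub_eq_add_neg, mul_comm]

namespace LinearMap.BilinForm

open Module (finrank)

variable {F V : Type*} [Field F] [AddCommGroup V] [Module F V]

-- For isotropic `w` the junk value `(B w w)⁻¹ = 0` makes this the identity.
noncomputable def reflection (B : LinearMap.BilinForm F V) (w : V) : Module.End F V :=
  Module.preReflection w ((2 * (B w w)⁻¹) • B w)

variable {B : LinearMap.BilinForm F V}

theorem reflection_apply (w v : V) :
    B.reflection w v = v - (2 * (B w w)⁻¹ * B w v) • w := by
  simp [reflection, Module.preReflection_apply, mul_assoc]

theorem reflection_apply_of_orthogonal {w v : V} (h : B w v = 0) : B.reflection w v = v := by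
  simp [reflection_apply, h]

theorem reflection_dual_apply_self {w : V} (hw : B w w ≠ 0) :
    ((2 * (B w w)⁻¹) • B w) w = 2 := by
  simp [mul_assoc, inv_mul_cancel₀ hw]

theorem reflection_apply_self {w : V} (hw : B w w ≠ 0) : B.reflection w w = -w :=
  Module.preReflection_apply_self (reflection_dual_apply_self hw)

theorem reflection_mul_self {w : V} (hw : B w w ≠ 0) : B.reflection w * B.reflection w = 1 :=
  LinearMap.ext (Module.involutive_preReflection (reflection_dual_apply_self hw))

theorem det_reflection [FiniteDimensional F V] {w : V} (hw : B w w ≠ 0) :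
    LinearMap.det (B.reflection w) = -1 := by
  rw [reflection, Module.det_preReflection, reflection_dual_apply_self hw]
  norm_num

theorem isOrthogonal_reflection (hB : B.IsSymm) (w : V) : B.IsOrthogonal (B.reflection w) := by
  intro x y
  by_cases hw : B w w = 0
  · simp [reflection_apply, hw]
  simp only [reflection_apply, map_sub, map_smul, LinearMap.sub_apply, LinearMap.smul_apply,
    smul_eq_mul, hB.eq x w]
  field_simp
  ring

theorem reflection_sub_apply_of_eq {y e : V} (hB : B.IsSymm) (h : B y y = B e e)
    (hye : B (y - e) (y - e) ≠ 0) : B.reflection (y - e) y = e := by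
  have key : B (y - e) (y - e) = 2 * B (y - e) y := by
    simp only [map_sub, LinearMap.sub_apply, hB.eq y e]
    linear_combination -h
  have : 2 * (B (y - e) (y - e))⁻¹ * B (y - e) y = 1 := by
    rw [key] at hye ⊢
    linear_combination mul_inv_cancel₀ hye
  rw [reflection_apply, this, one_smul, sub_sub_cancel]

theorem isOrthogonal_prod_map_reflection (hB : B.IsSymm) (l : List V) :
    B.IsOrthogonal (l.map B.reflection).prod := by
  induction l with
  | nil => intro x y; rfl
  | cons w l ih =>
    intro x y
    simp only [List.map_cons, List.prod_cons, Module.End.mul_apply]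
    rw [isOrthogonal_reflection hB w, ih]

theorem det_prod_map_reflection [FiniteDimensional F V] {l : List V}
    (hl : ∀ w ∈ l, B w w ≠ 0) :
    LinearMap.det (l.map B.reflection).prod = (-1) ^ l.length := by
  induction l with
  | nil => simp
  | cons w l ih =>
    rw [List.map_cons, List.prod_cons, map_mul, det_reflection (hl w (by simp)),
      ih (fun v hv => hl v (by simp [hv])), List.length_cons, pow_succ']

theorem prod_map_reflection_reverse_mul {l : List V} (hl : ∀ w ∈ l, B w w ≠ 0) :
    (l.reverse.map B.reflection).prod * (l.map B.reflection).prod = 1 := by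
  induction l with
  | nil => simp
  | cons w l ih =>
    simp only [List.reverse_cons, List.map_append, List.prod_append, List.map_cons,
      List.map_nil, List.prod_cons, List.prod_nil, mul_one]
    rw [mul_assoc, ← mul_assoc (B.reflection w), reflection_mul_self (hl w (by simp)), one_mul,
      ih (fun v hv => hl v (by simp [hv]))]

theorem exists_prod_map_reflection_apply_eq (h2 : (2 : F) ≠ 0) (hB : B.IsSymm) {y e : V}
    (he : B e e ≠ 0) (h : B y y = B e e) :
    ∃ l : List V, (∀ w ∈ l, B w w ≠ 0) ∧ (l.map B.reflection).prod y = e := by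
  by_cases hye : B (y - e) (y - e) = 0
  · -- `B (y - e) (y - e) + B (y + e) (y + e) = 4 B e e`, so `y + e = y - -e` is anisotropic
    have hye' : B (y - -e) (y - -e) ≠ 0 := by
      have : B (y - -e) (y - -e) = 4 * B e e := by
        simp only [map_sub, map_neg, LinearMap.sub_apply, LinearMap.neg_apply] at hye ⊢
        linear_combination 2 * h - hye
      rw [this, show (4 : F) = 2 * 2 by norm_num]
      exact mul_ne_zero (mul_ne_zero h2 h2) he
    refine ⟨[e, y - -e], by simp only [List.mem_cons, List.not_mem_nil]; aesop, ?_⟩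
    simp only [List.map_cons, List.map_nil, List.prod_cons, List.prod_nil, mul_one,
      Module.End.mul_apply]
    rw [reflection_sub_apply_of_eq hB (by simpa using h) hye', map_neg, reflection_apply_self he,
      neg_neg]
  · exact ⟨[y - e], by simpa using hye, by simp [reflection_sub_apply_of_eq hB h hye]⟩

theorem prod_map_reflection_apply_of_orthogonal {l : List V} {e : V} (hl : ∀ w ∈ l, B w e = 0) :
    (l.map B.reflection).prod e = e := by
  induction l with
  | nil => rfl
  | cons w l ih =>
    rw [List.map_cons, List.prod_cons, Module.End.mul_apply, ih (fun v hv => hl v (by simp [hv])),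
      reflection_apply_of_orthogonal (hl w (by simp))]

theorem coe_prod_map_restrict_reflection (W : Submodule F V) (l : List W) (x : W) :
    (((l.map (B.restrict W).reflection).prod x : W) : V) =
      ((l.map Subtype.val).map B.reflection).prod x := by
  induction l with
  | nil => rfl
  | cons w l ih =>
    simp only [List.map_cons, List.prod_cons, Module.End.mul_apply, ← ih]
    simp [reflection_apply]

theorem eq_prod_map_reflection_of_restrict (hB : B.IsSymm) {e : V} (he : B e e ≠ 0)
    {τ : Module.End F V} (hτe : τ e = e)
    (hτW : ∀ x ∈ B.orthogonal (F ∙ e), τ x ∈ B.orthogonal (F ∙ e))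
    {l : List (B.orthogonal (F ∙ e))}
    (hl : τ.restrict hτW = (l.map (B.restrict _).reflection).prod) :
    τ = ((l.map Subtype.val).map B.reflection).prod := by
  refine LinearMap.ext_on_codisjoint (isCompl_span_singleton_orthogonal he).codisjoint ?_ ?_
  · intro x hx
    obtain ⟨c, rfl⟩ := Submodule.mem_span_singleton.1 hx
    rw [map_smul, map_smul, hτe, prod_map_reflection_apply_of_orthogonal]
    simp only [List.mem_map]
    rintro _ ⟨w, -, rfl⟩
    rw [hB.eq]
    exact (mem_orthogonal_iff.1 w.2) e (Submodule.mem_span_singleton_self e)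
  · intro x hx
    rw [show x = ((⟨x, hx⟩ : B.orthogonal (F ∙ e)) : V) from rfl,
      ← coe_prod_map_restrict_reflection, ← hl]
    rfl

theorem exists_eq_prod_map_reflection [FiniteDimensional F V] (h2 : (2 : F) ≠ 0)
    (hB : B.IsSymm) (hB' : B.Nondegenerate) {τ : Module.End F V} (hτ : B.IsOrthogonal τ) :
    ∃ l : List V, (∀ w ∈ l, B w w ≠ 0) ∧ τ = (l.map B.reflection).prod := by
  let : Invertible (2 : F) := invertibleOfNonzero h2
  induction hn : finrank F V generalizing V with
  | zero =>
    have : Subsingleton V := Module.finrank_zero_iff.mp hn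
    exact ⟨[], by simp, Subsingleton.elim _ _⟩
  | succ n ih =>
    -- at most two reflections move `τ e` back to `e`; what remains fixes `e` and so acts on `e^⊥`
    have : Nontrivial V := Module.nontrivial_of_finrank_eq_succ hn
    obtain ⟨e, he⟩ := exists_bilinForm_self_ne_zero hB'.ne_zero (isSymm_iff.1 hB)
    obtain ⟨l₀, hl₀, hl₀e⟩ := exists_prod_map_reflection_apply_eq h2 hB he (hτ e e)
    set τ' := (l₀.map B.reflection).prod * τ
    have hτ' : B.IsOrthogonal τ' := fun x y => by
      simp only [τ', Module.End.mul_apply, isOrthogonal_prod_map_reflection hB l₀ _ _, hτ x y]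
    have hτ'W : ∀ x ∈ B.orthogonal (F ∙ e), τ' x ∈ B.orthogonal (F ∙ e) := by
      intro x hx
      refine mem_orthogonal_iff.2 fun y hy => ?_
      obtain ⟨c, rfl⟩ := Submodule.mem_span_singleton.1 hy
      have hy' : τ' (c • e) = c • e := by rw [map_smul, Module.End.mul_apply, hl₀e]
      change B _ _ = 0
      rw [← hy', hτ']
      exact mem_orthogonal_iff.1 hx _ hy
    have hfin : finrank F (B.orthogonal (F ∙ e)) = n := by
      have := Submodule.finrank_add_eq_of_isCompl (isCompl_span_singleton_orthogonal he)
      rw [finrank_span_singleton (ne_zero_of_map he), hn] at this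
      omega
    obtain ⟨lW, hlW, hτW⟩ := ih (hB.restrict _)
      (restrict_nondegenerate_orthogonal_spanSingleton B hB' hB.isRefl he)
      (τ := τ'.restrict hτ'W) (fun x y => hτ' x y) hfin
    refine ⟨l₀.reverse ++ lW.map Subtype.val, ?_, ?_⟩
    · simp only [List.mem_append, List.mem_reverse, List.mem_map]
      rintro w (hw | ⟨w, hw, rfl⟩)
      exacts [hl₀ w hw, hlW w hw]
    · rw [List.map_append, List.prod_append,
        ← eq_prod_map_reflection_of_restrict hB he hl₀e hτ'W hτW,
        ← mul_assoc, prod_map_reflection_reverse_mul hl₀, one_mul]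

end LinearMap.BilinForm

theorem Algebra.toSubmodule_adjoin_le {R A : Type*} [CommSemiring R] [Semiring A] [Algebra R A]
    {s : Set A} {W : Submodule R A} (h1 : 1 ∈ W) (hs : ∀ g ∈ s, ∀ w ∈ W, g * w ∈ W) :
    Subalgebra.toSubmodule (Algebra.adjoin R s) ≤ W := by
  rw [Algebra.adjoin_eq_span, Submodule.span_le]
  intro x hx
  induction hx using Submonoid.closure_induction_left with
  | one => exact h1
  | mul_left g hg y _ ih => exact hs g hg y ih

namespace CliffordAlgebra

open QuadraticMap LinearMap.BilinForm
open Module (Basis Dual)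

variable {F V : Type*} [Field F] [AddCommGroup V] [Module F V] {Q : QuadraticForm F V}

theorem ι_mul_sub_involute_mul_ι (v : V) (x : CliffordAlgebra Q) :
    ι Q v * x - involute x * ι Q v = contractLeft (polarBilin Q v) x := by
  let lhs : CliffordAlgebra Q →ₗ[F] CliffordAlgebra Q :=
    LinearMap.mulLeft F (ι Q v) - LinearMap.mulRight F (ι Q v) ∘ₗ involute.toLinearMap
  suffices x ∈ LinearMap.eqLocus lhs (contractLeft (polarBilin Q v)) from this
  refine Algebra.toSubmodule_adjoin_le ?_ ?_ (adjoin_range_ι (Q := Q) ▸ Algebra.mem_top)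
  · simp [lhs, LinearMap.mem_eqLocus]
  · rintro _ ⟨u, rfl⟩ w hw
    simp only [lhs, LinearMap.mem_eqLocus, LinearMap.sub_apply, LinearMap.mulLeft_apply,
      LinearMap.comp_apply, LinearMap.mulRight_apply, AlgHom.toLinearMap_apply] at hw ⊢
    rw [contractLeft_ι_mul, ← hw, map_mul, involute_ι, polarBilin_apply_apply, Algebra.smul_def,
      ← ι_mul_ι_add_swap v u]
    noncomm_ring

theorem contractLeft_eq_zero_of_mem_adjoin {f : Dual F V} {T : Set V} (hf : ∀ y ∈ T, f y = 0)
    {x : CliffordAlgebra Q} (hx : x ∈ Algebra.adjoin F (ι Q '' T)) : contractLeft f x = 0 := by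
  refine Algebra.toSubmodule_adjoin_le (W := LinearMap.ker (contractLeft f)) ?_ ?_ hx
  · exact contractLeft_one Q f
  · rintro _ ⟨y, hy, rfl⟩ w hw
    rw [LinearMap.mem_ker] at hw ⊢
    rw [contractLeft_ι_mul, hw, hf y hy, zero_smul, mul_zero, sub_zero]

theorem exists_eq_add_ι_mul_of_mem_adjoin_insert {w : V} {T : Set V}
    (hT : ∀ y ∈ T, polar Q w y = 0) {x : CliffordAlgebra Q}
    (hx : x ∈ Algebra.adjoin F (ι Q '' insert w T)) :
    ∃ a ∈ Algebra.adjoin F (ι Q '' T), ∃ b ∈ Algebra.adjoin F (ι Q '' T),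
      x = a + ι Q w * b := by
  let A := Subalgebra.toSubmodule (Algebra.adjoin F (ι Q '' T))
  suffices x ∈ A ⊔ A.map (LinearMap.mulLeft F (ι Q w)) by
    obtain ⟨a, ha, _, ⟨b, hb, rfl⟩, rfl⟩ := Submodule.mem_sup.1 this
    exact ⟨a, ha, b, hb, rfl⟩
  refine Algebra.toSubmodule_adjoin_le (Submodule.mem_sup_left (Subalgebra.one_mem _)) ?_ hx
  rintro _ ⟨y, hy, rfl⟩ z hz
  obtain ⟨a, ha, _, ⟨b, hb, rfl⟩, rfl⟩ := Submodule.mem_sup.1 hz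
  rcases hy with rfl | hy
  · rw [LinearMap.mulLeft_apply, mul_add, ← mul_assoc, ι_sq_scalar, add_comm]
    exact Submodule.add_mem_sup (Subalgebra.mul_mem _ (Subalgebra.algebraMap_mem _ _) hb)
      (Submodule.mem_map_of_mem ha)
  · have hyA : ι Q y ∈ Algebra.adjoin F (ι Q '' T) := Algebra.subset_adjoin ⟨y, hy, rfl⟩
    have hyw : ι Q y * ι Q w = -(ι Q w * ι Q y) := by
      rw [eq_neg_iff_add_eq_zero, add_comm, ι_mul_ι_add_swap, hT y hy, map_zero]
    rw [LinearMap.mulLeft_apply, mul_add, ← mul_assoc, hyw, neg_mul, mul_assoc, ← mul_neg]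
    exact Submodule.add_mem_sup (Subalgebra.mul_mem _ hyA ha)
      (Submodule.mem_map_of_mem (neg_mem (Subalgebra.mul_mem _ hyA hb)))

theorem mem_bot_of_forall_contractLeft_eq_zero_of_basis {I : Type*} (e : Basis I F V)
    (he : ∀ i j, i ≠ j → polar Q (e i) (e j) = 0) (s : Finset I) {x : CliffordAlgebra Q}
    (hx : x ∈ Algebra.adjoin F (ι Q '' (e '' s))) (hc : ∀ f : Dual F V, contractLeft f x = 0) :
    x ∈ (⊥ : Subalgebra F (CliffordAlgebra Q)) := by
  classical
  induction s using Finset.induction_on generalizing x with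
  | empty => simpa using hx
  | insert t s ht ih =>
    rw [Finset.coe_insert, Set.image_insert_eq] at hx
    obtain ⟨a, ha, b, hb, rfl⟩ := exists_eq_add_ι_mul_of_mem_adjoin_insert
      (by rintro _ ⟨j, hj, rfl⟩; exact he t j (by rintro rfl; exact ht hj)) hx
    -- contracting with the coordinate of `e t` recovers `b`
    have hkill : ∀ y ∈ Algebra.adjoin F (ι Q '' (e '' s)), contractLeft (e.coord t) y = 0 :=
      fun y => contractLeft_eq_zero_of_mem_adjoin (by
        rintro _ ⟨j, hj, rfl⟩
        simp [show t ≠ j by rintro rfl; exact ht hj])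
    have hb0 : b = 0 := by
      simpa [contractLeft_ι_mul, hkill a ha, hkill b hb] using hc (e.coord t)
    rw [hb0, mul_zero, add_zero] at hc ⊢
    exact ih ha hc

theorem mem_bot_of_forall_contractLeft_eq_zero [FiniteDimensional F V] (h2 : (2 : F) ≠ 0)
    {x : CliffordAlgebra Q} (hx : ∀ f : Dual F V, contractLeft f x = 0) :
    x ∈ (⊥ : Subalgebra F (CliffordAlgebra Q)) := by
  let : Invertible (2 : F) := invertibleOfNonzero h2
  obtain ⟨e, he⟩ :=
    LinearMap.BilinForm.exists_orthogonal_basis (B := polarBilin Q) ⟨polar_comm Q⟩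
  refine mem_bot_of_forall_contractLeft_eq_zero_of_basis e (fun i j hij => he hij) Finset.univ ?_ hx
  rw [Finset.coe_univ, Set.image_univ]
  have hspan : Submodule.span F (Set.range e) ≤
      (Subalgebra.toSubmodule (Algebra.adjoin F (ι Q '' Set.range e))).comap (ι Q) :=
    Submodule.span_le.2 fun v hv => Algebra.subset_adjoin ⟨v, hv, rfl⟩
  rw [e.span_eq] at hspan
  have : Algebra.adjoin F (ι Q '' Set.range e) = ⊤ := by
    rw [eq_top_iff, ← adjoin_range_ι]
    exact Algebra.adjoin_le fun _ ⟨v, hv⟩ => hv ▸ hspan Submodule.mem_top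
  exact this ▸ Algebra.mem_top



/-- `x` induces `σ` by the twisted conjugation `v ↦ x v (x')⁻¹`, written without inverses. -/
def IsTwistedConj (x : CliffordAlgebra Q) (σ : Module.End F V) : Prop :=
  ∀ v, x * ι Q v = ι Q (σ v) * involute x

theorem isTwistedConj_units_iff {u : (CliffordAlgebra Q)ˣ} {σ : Module.End F V} :
    IsTwistedConj (u : CliffordAlgebra Q) σ ↔
      ∀ v, (u : CliffordAlgebra Q) * ι Q v * involute (↑u⁻¹ : CliffordAlgebra Q) =
        ι Q (σ v) := by
  let u' := Units.map (involute : CliffordAlgebra Q →ₐ[F] _).toMonoidHom u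
  have hu' : involute (↑u⁻¹ : CliffordAlgebra Q) = ↑u'⁻¹ := rfl
  simp only [IsTwistedConj, hu', Units.mul_inv_eq_iff_eq_mul]
  rfl

theorem IsTwistedConj.mul {x y : CliffordAlgebra Q} {σ τ : Module.End F V}
    (hx : IsTwistedConj x σ) (hy : IsTwistedConj y τ) : IsTwistedConj (x * y) (σ * τ) := by
  intro v
  rw [mul_assoc, hy v, ← mul_assoc, hx, map_mul, mul_assoc, Module.End.mul_apply]

theorem IsTwistedConj.units_inv_mul {U u : (CliffordAlgebra Q)ˣ} {σ : Module.End F V}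
    (hU : IsTwistedConj (U : CliffordAlgebra Q) σ)
    (hu : IsTwistedConj (u : CliffordAlgebra Q) σ) :
    IsTwistedConj (↑(U⁻¹ * u) : CliffordAlgebra Q) 1 := by
  intro v
  have hU' : (↑U⁻¹ : CliffordAlgebra Q) * ι Q (σ v) =
      ι Q v * involute (↑U⁻¹ : CliffordAlgebra Q) := by
    rw [← isTwistedConj_units_iff.1 hU v, ← mul_assoc, ← mul_assoc, Units.inv_mul, one_mul]
  rw [Units.val_mul, mul_assoc, hu v, ← mul_assoc, hU', mul_assoc, ← map_mul]
  rfl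

theorem IsTwistedConj.isOrthogonal (h2 : (2 : F) ≠ 0) {u : (CliffordAlgebra Q)ˣ}
    {σ : Module.End F V} (hu : IsTwistedConj (u : CliffordAlgebra Q) σ) :
    (polarBilin Q).IsOrthogonal σ := by
  let : Invertible (2 : F) := invertibleOfNonzero h2
  have hu' : ∀ v, involute (u : CliffordAlgebra Q) * ι Q v = ι Q (σ v) * u := fun v => by
    simpa using congrArg involute (hu v)
  -- `Q (σ v) u' = σ v σ v u' = σ v u v = u' v v = Q v u'`
  have hQ : ∀ v, Q (σ v) = Q v := fun v => by
    apply (algebraMap F (CliffordAlgebra Q)).injective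
    apply (u.isUnit.map involute).mul_right_cancel
    rw [← ι_sq_scalar, mul_assoc, ← hu v, ← mul_assoc, ← hu' v, mul_assoc, ι_sq_scalar,
      Algebra.commutes]
  intro x y
  simp [polarBilin_apply_apply, polar, ← map_add, hQ]

theorem isTwistedConj_ι {w : V} (hw : polarBilin Q w w ≠ 0) :
    IsTwistedConj (ι Q w) (reflection (polarBilin Q) w) := by
  intro v
  have hk : 2 * (polarBilin Q w w)⁻¹ * polarBilin Q w v * Q w = polar Q w v := by
    simp only [polarBilin_apply_apply, polar_self, nsmul_eq_mul, Nat.cast_two] at hw ⊢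
    rw [mul_right_comm, mul_right_comm 2, mul_inv_cancel₀ hw, one_mul]
  rw [LinearMap.BilinForm.reflection_apply, map_sub, map_smul, involute_ι, sub_mul, mul_neg,
    smul_mul_assoc, mul_neg, ι_sq_scalar, smul_neg, sub_neg_eq_add, Algebra.smul_def,
    ← (algebraMap F (CliffordAlgebra Q)).map_mul, hk, ← ι_mul_ι_add_swap w v]
  abel

theorem isTwistedConj_prod_map_ι {l : List V} (hl : ∀ w ∈ l, polarBilin Q w w ≠ 0) :
    IsTwistedConj (l.map (ι Q)).prod (l.map (reflection (polarBilin Q))).prod := by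
  induction l with
  | nil => intro v; simp
  | cons w l ih =>
    simp only [List.map_cons, List.prod_cons]
    exact (isTwistedConj_ι (hl w (by simp))).mul (ih fun v hv => hl v (by simp [hv]))

theorem isUnit_prod_map_ι {l : List V} (hl : ∀ w ∈ l, polarBilin Q w w ≠ 0) :
    IsUnit (l.map (ι Q)).prod := by
  refine List.prod_isUnit fun _ hx => ?_
  obtain ⟨w, hw, rfl⟩ := List.mem_map.1 hx
  refine isUnit_ι_of_isUnit Q (Ne.isUnit fun h => hl w hw ?_)
  rw [polarBilin_apply_apply, polar_self, h, smul_zero]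

section Nondegenerate

variable [FiniteDimensional F V] (h2 : (2 : F) ≠ 0) (hQ : (polarBilin Q).Nondegenerate)
include h2 hQ

theorem IsTwistedConj.mem_bot {z : CliffordAlgebra Q} (hz : IsTwistedConj z 1) :
    z ∈ (⊥ : Subalgebra F (CliffordAlgebra Q)) := by
  refine mem_bot_of_forall_contractLeft_eq_zero h2 fun f => ?_
  obtain ⟨v, rfl⟩ := (LinearMap.BilinForm.toDual (polarBilin Q) hQ).surjective f
  have hz' : involute z * ι Q v = ι Q v * z := by simpa using congrArg involute (hz v)
  have hv : LinearMap.BilinForm.toDual (polarBilin Q) hQ v = polarBilin Q v :=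
    LinearMap.ext fun _ => toDual_def hQ
  rw [hv, ← ι_mul_sub_involute_mul_ι, hz', sub_self]

theorem IsTwistedConj.det_eq_one_iff {u : (CliffordAlgebra Q)ˣ} {σ : Module.End F V}
    (hu : IsTwistedConj (u : CliffordAlgebra Q) σ) :
    LinearMap.det σ = 1 ↔ involute (u : CliffordAlgebra Q) = u := by
  let : Invertible (2 : F) := invertibleOfNonzero h2
  obtain ⟨l, hl, rfl⟩ :=
    exists_eq_prod_map_reflection h2 ⟨polar_comm Q⟩ hQ (hu.isOrthogonal h2)
  let U := (isUnit_prod_map_ι hl).unit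
  obtain ⟨c, hc⟩ := Algebra.mem_bot.1
    (((isTwistedConj_prod_map_ι hl).units_inv_mul (U := U) hu).mem_bot h2 hQ)
  have hu' : (u : CliffordAlgebra Q) = (l.map (ι Q)).prod * algebraMap F _ c := by
    rw [hc, ← IsUnit.unit_spec (isUnit_prod_map_ι hl), ← Units.val_mul, mul_inv_cancel_left]
  have hne : (l.map (ι Q)).prod * algebraMap F _ c ≠ 0 := hu' ▸ u.ne_zero
  rw [det_prod_map_reflection hl, hu', map_mul, AlgHom.commutes, involute_prod_map_ι,
    smul_mul_assoc]
  have := (smul_left_injective F hne).eq_iff (a := (-1 : F) ^ l.length) (b := 1)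
  rw [one_smul] at this
  exact this.symm

theorem isTwistedConj_one_iff (u : (CliffordAlgebra Q)ˣ) :
    IsTwistedConj (u : CliffordAlgebra Q) 1 ↔
      ∃ c : F, c ≠ 0 ∧ (u : CliffordAlgebra Q) = algebraMap F _ c := by
  let : Invertible (2 : F) := invertibleOfNonzero h2
  refine ⟨fun hu => ?_, fun ⟨c, _, hc⟩ v => ?_⟩
  · obtain ⟨c, hc⟩ := Algebra.mem_bot.1 (hu.mem_bot h2 hQ)
    refine ⟨c, ?_, hc.symm⟩
    rintro rfl
    exact u.ne_zero (by rw [← hc, map_zero])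
  · rw [hc, AlgHom.commutes, Algebra.commutes]
    rfl

theorem exists_isTwistedConj_of_det_eq_one {τ : Module.End F V}
    (hτ : (polarBilin Q).IsOrthogonal τ) (hdet : LinearMap.det τ = 1) :
    ∃ u : (CliffordAlgebra Q)ˣ,
      IsTwistedConj (u : CliffordAlgebra Q) τ ∧ involute (u : CliffordAlgebra Q) = u := by
  obtain ⟨l, hl, rfl⟩ := exists_eq_prod_map_reflection h2 ⟨polar_comm Q⟩ hQ hτ
  refine ⟨(isUnit_prod_map_ι hl).unit, isTwistedConj_prod_map_ι hl, ?_⟩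
  rw [IsUnit.unit_spec, involute_prod_map_ι, ← det_prod_map_reflection hl, hdet, one_smul]

end Nondegenerate

end CliffordAlgebra

open CliffordAlgebra

/-- For `x ∈ Γ(V)`, `ρ(x) ∈ SO(V)` iff `x` is even; consequently `ρ₀` gives a short
exact sequence `1 → F^× → Γ⁰(V) → SO(V) → 1` (kernel is the scalars, and every
special isometry lifts to an even element of the Clifford group). -/
theorem stmt_5 {F : Type*} [Field F] (hchar : (2 : F) ≠ 0)
    {V : Type*} [AddCommGroup V] [Module F V] [FiniteDimensional F V]
    (S : LinearMap.BilinForm F V) (hS : ∀ x y, S x y = S y x)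
    (hnd : ∀ x : V, (∀ y : V, S x y = 0) → x = 0)
    (Q : QuadraticForm F V) (hQ : ∀ v, Q v = -(S v v)) :
    (∀ (u : (CliffordAlgebra Q)ˣ) (σ : V →ₗ[F] V),
      (∀ v : V, ι Q (σ v) = (u : CliffordAlgebra Q) * ι Q v *
        involute (↑u⁻¹ : CliffordAlgebra Q)) →
      (LinearMap.det σ = 1 ↔ involute (u : CliffordAlgebra Q) = (u : CliffordAlgebra Q))) ∧
    (∀ u : (CliffordAlgebra Q)ˣ,
      involute (u : CliffordAlgebra Q) = (u : CliffordAlgebra Q) →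
      ((∀ v : V, (u : CliffordAlgebra Q) * ι Q v *
          involute (↑u⁻¹ : CliffordAlgebra Q) = ι Q v) ↔
        ∃ c : F, c ≠ 0 ∧ (u : CliffordAlgebra Q) = algebraMap F (CliffordAlgebra Q) c)) ∧
    (∀ τ : V ≃ₗ[F] V, (∀ x y, S (τ x) (τ y) = S x y) →
      LinearMap.det (τ : V →ₗ[F] V) = 1 →
      ∃ u : (CliffordAlgebra Q)ˣ,
        involute (u : CliffordAlgebra Q) = (u : CliffordAlgebra Q) ∧
        ∀ v : V, (u : CliffordAlgebra Q) * ι Q v *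
          involute (↑u⁻¹ : CliffordAlgebra Q) = ι Q (τ v)) := by
  have hpolar : ∀ x y, QuadraticMap.polarBilin Q x y = -(2 * S x y) := fun x y => by
    rw [QuadraticMap.polarBilin_apply_apply, QuadraticMap.polar, hQ, hQ, hQ]
    simp only [map_add, LinearMap.add_apply]
    linear_combination (-1 : F) * hS y x
  have hQnd : (QuadraticMap.polarBilin Q).Nondegenerate :=
    ⟨fun x hx => hnd x fun y => by simpa [hpolar, hchar] using hx y,
      fun y hy => hnd y fun x => by simpa [hpolar, hchar, hS x y] using hy x⟩
  refine ⟨fun u σ hσ => ?_, fun u _ => ?_, fun τ hτ hdet => ?_⟩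
  · exact (isTwistedConj_units_iff.2 fun v => (hσ v).symm).det_eq_one_iff hchar hQnd
  · exact isTwistedConj_units_iff.symm.trans (isTwistedConj_one_iff hchar hQnd u)
  · obtain ⟨u, hu, hinv⟩ := exists_isTwistedConj_of_det_eq_one hchar hQnd
      (fun x y => by simp [hpolar, hτ]) hdet
    exact ⟨u, hinv, isTwistedConj_units_iff.1 hu⟩
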